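/- arXiv:1903.01479 — 3 statements merged into one kernel-verified Lean document; each statement's English description precedes it below -/
import Mathlib

section
/- Let d, N be natural numbers and let K_1, …, K_N be strictly incoherent d×d Kraus operators with ∑_{n=1}^N K_nᴴK_n ⪯ I. Then there exists a diagonal d×d matrix K̃ with nonnegative real entries (in particular a strictly incoherent Kraus operator) such that K̃ᴴK̃ + ∑_{n=1}^N K_nᴴK_n = I. (Every stochastic quantum operation decomposable into strictly incoherent Kraus operators is part of a deterministic strictly incoherent operation.) -/
open Matrix BigOperators
open scoped Kronecker Classical ComplexOrder

/-- The qubit state with Bloch vector `(rx, ry, rz)`: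
`ρ = (1/2)(I + rx σx + ry σy + rz σz)`. -/
noncomputable def blochState (rx ry rz : ℝ) : Matrix (Fin 2) (Fin 2) ℂ :=
  !![(1 + rz : ℂ)/2, ((rx : ℂ) - ry * Complex.I)/2;
     ((rx : ℂ) + ry * Complex.I)/2, (1 - rz : ℂ)/2]

/-- `K` is an incoherent Kraus operator: every column has at most one nonzero entry. -/
def IsIncoherentKraus {d : ℕ} (K : Matrix (Fin d) (Fin d) ℂ) : Prop :=
  ∀ j i i', K i j ≠ 0 → K i' j ≠ 0 → i = i'

/-- `K` is a strictly incoherent Kraus operator: every row and every column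
has at most one nonzero entry. -/
def IsSIKraus {d : ℕ} (K : Matrix (Fin d) (Fin d) ℂ) : Prop :=
  (∀ i j j', K i j ≠ 0 → K i j' ≠ 0 → j = j') ∧
  (∀ j i i', K i j ≠ 0 → K i' j ≠ 0 → i = i')

/-- Partial trace over the first (A) factor. -/
noncomputable def ptraceA {dA dB : ℕ} (X : Matrix (Fin dA × Fin dB) (Fin dA × Fin dB) ℂ) :
    Matrix (Fin dB) (Fin dB) ℂ :=
  fun j j' => ∑ i, X (i, j) (i, j')

/-- Partial trace over the second (B) factor. -/
noncomputable def ptraceB {dA dB : ℕ} (X : Matrix (Fin dA × Fin dB) (Fin dA × Fin dB) ℂ) :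
    Matrix (Fin dA) (Fin dA) ℂ :=
  fun i i' => ∑ j, X (i, j) (i', j)

/-- The completely dephasing map: keep the diagonal of `X`. -/
noncomputable def dephase {d : ℕ} (X : Matrix (Fin d) (Fin d) ℂ) : Matrix (Fin d) (Fin d) ℂ :=
  Matrix.diagonal X.diag

/-! Since each row of `K n` has at most one nonzero entry, distinct columns of `K n` have
disjoint supports, so `(K n)ᴴ * K n` is diagonal. Hence `1 - ∑ n, (K n)ᴴ * K n` is a positive
semidefinite diagonal matrix, and its entrywise square root is the missing Kraus operator. -/

namespace Matrix

variable {ι m n 𝕜 α : Type*}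

theorem isDiag_sum [AddCommMonoid α] [Fintype ι] {A : ι → Matrix n n α}
    (hA : ∀ k, (A k).IsDiag) : (∑ k, A k).IsDiag := fun i j hij => by
  simp only [sum_apply]
  exact Finset.sum_eq_zero fun k _ => hA k hij

theorem isDiag_conjTranspose_mul_self [Fintype m] [NonUnitalNonAssocSemiring α] [StarRing α]
    {K : Matrix m n α} (hK : ∀ i j j', K i j ≠ 0 → K i j' ≠ 0 → j = j') :
    (Kᴴ * K).IsDiag := fun j j' hjj' => by
  refine Finset.sum_eq_zero fun i _ => ?_
  by_cases hj : K i j = 0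
  · simp [hj]
  · have hj' : K i j' = 0 := by_contra fun h => hjj' (hK i j j' hj h)
    simp [hj']

theorem PosSemidef.exists_conjTranspose_diagonal_mul_self [Fintype n] [DecidableEq n]
    [RCLike 𝕜] {P : Matrix n n 𝕜} (hP : P.PosSemidef) (hdiag : P.IsDiag) :
    ∃ c : n → ℝ, (∀ i, 0 ≤ c i) ∧
      (diagonal fun i => (c i : 𝕜))ᴴ * diagonal (fun i => (c i : 𝕜)) = P := by
  refine ⟨fun i => √(RCLike.re (P i i)), fun i => Real.sqrt_nonneg _, ?_⟩
  rw [diagonal_conjTranspose, diagonal_mul_diagonal]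
  conv_rhs => rw [← hdiag.diagonal_diag]
  congr 1
  funext i
  obtain ⟨hre, him⟩ := RCLike.nonneg_iff.mp (hP.diag_nonneg (i := i))
  simp only [Pi.star_apply, RCLike.star_def, RCLike.conj_ofReal, ← RCLike.ofReal_mul,
    Real.mul_self_sqrt hre, diag_apply]
  exact RCLike.conj_eq_iff_re.mp (RCLike.conj_eq_iff_im.mpr him)

end Matrix

theorem isSIKraus_diagonal {d : ℕ} (v : Fin d → ℂ) : IsSIKraus (diagonal v) := by
  have hdiag : ∀ i j, diagonal v i j ≠ 0 → i = j := fun i j h =>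
    by_contra fun hij => h (diagonal_apply_ne v hij)
  exact ⟨fun i j j' h h' => (hdiag i j h).symm.trans (hdiag i j' h'),
    fun j i i' h h' => (hdiag i j h).trans (hdiag i' j h').symm⟩

/-- Every stochastic operation decomposable into strictly incoherent Kraus operators can
be completed to a deterministic strictly incoherent operation by adding a single diagonal
Kraus operator with nonnegative real entries. -/
theorem sio_free_completion (d N : ℕ)
    (K : Fin N → Matrix (Fin d) (Fin d) ℂ)
    (hK : ∀ n, IsSIKraus (K n))
    (hsum : ((1 : Matrix (Fin d) (Fin d) ℂ) - ∑ n, (K n)ᴴ * K n).PosSemidef) :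
    ∃ c : Fin d → ℝ, (∀ i, 0 ≤ c i) ∧
      IsSIKraus (Matrix.diagonal (fun i => (c i : ℂ))) ∧
      (Matrix.diagonal (fun i => (c i : ℂ)))ᴴ * Matrix.diagonal (fun i => (c i : ℂ)) +
        ∑ n, (K n)ᴴ * K n = 1 := by
  have hdiag : ((1 : Matrix (Fin d) (Fin d) ℂ) - ∑ n, (K n)ᴴ * K n).IsDiag :=
    isDiag_one.sub (isDiag_sum fun n => isDiag_conjTranspose_mul_self (hK n).1)
  obtain ⟨c, hc, hcP⟩ := hsum.exists_conjTranspose_diagonal_mul_self hdiag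
  exact ⟨c, hc, isSIKraus_diagonal _, (congrArg (· + _) hcP).trans (sub_add_cancel _ _)⟩
end

section
/- Let ρ and σ be d×d density matrices, p ∈ [0,1], and suppose there exists a finite family (K_i) of strictly incoherent d×d Kraus operators with ∑_i K_iᴴK_i ⪯ I and ∑_i K_i ρ K_iᴴ = p·σ. Then for every diagonal d×d density matrix τ (incoherent state) and every q with 0 ≤ q ≤ 1−p, there exists a finite family (L_j) of strictly incoherent d×d Kraus operators with ∑_j L_jᴴL_j ⪯ I and ∑_j L_j ρ L_jᴴ = p·σ + q·τ. -/
open Matrix BigOperators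
open scoped Kronecker Classical ComplexOrder

/-!
The defect `D = 1 - ∑ Kᵢᴴ Kᵢ` of a strictly incoherent operation is diagonal, because each
`Kᵢᴴ Kᵢ` is, and `tr (D ρ) = 1 - p` by cyclicity of the trace. Completing the family `Kᵢ` with the
single-entry operators `√(c τₘₘ Dₖₖ) |m⟩⟨k|`, where `c = q / (1 - p) ∈ [0, 1]`, adds the
measure-and-prepare map `X ↦ c tr (D X) τ`: it contributes `c (1 - p) τ = q τ` to the output
while consuming only the part `c D ⪯ D` of the defect.
-/

theorem Complex.exists_star_mul_self_eq_of_nonneg {z : ℂ} (hz : 0 ≤ z) :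
    ∃ a : ℂ, star a * a = z := by
  obtain ⟨x, hx, rfl⟩ := RCLike.nonneg_iff_exists_ofReal.mp hz
  refine ⟨(√x : ℝ), ?_⟩
  simp [← Complex.ofReal_mul, Real.mul_self_sqrt hx]

namespace Matrix

variable {n α : Type*}

theorem isDiag_sum_s5 {ι : Type*} [AddCommMonoid α] {s : Finset ι} {A : ι → Matrix n n α}
    (h : ∀ i ∈ s, (A i).IsDiag) : (∑ i ∈ s, A i).IsDiag := fun j k hjk => by
  simp [sum_apply, Finset.sum_eq_zero fun i hi => h i hi hjk]

variable [Fintype n]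

theorem IsDiag.trace_mul [NonUnitalNonAssocSemiring α] {A : Matrix n n α} (hA : A.IsDiag)
    (X : Matrix n n α) : (A * X).trace = ∑ i, A i i * X i i :=
  Finset.sum_congr rfl fun i _ => Finset.sum_eq_single i
    (fun j _ hj => by simp [hA hj.symm]) (absurd (Finset.mem_univ i))

variable [DecidableEq n]

theorem trace_one_sub_sum_conjTranspose_mul_mul {ι R : Type*} [Fintype ι] [CommRing R]
    [StarRing R] (K : ι → Matrix n n R) (ρ : Matrix n n R) :
    ((1 - ∑ i, (K i)ᴴ * K i) * ρ).trace = ρ.trace - (∑ i, K i * ρ * (K i)ᴴ).trace := by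
  rw [sub_mul, one_mul, Finset.sum_mul, trace_sub, trace_sum, trace_sum]
  exact congrArg _ (Finset.sum_congr rfl fun i _ => (trace_mul_cycle _ _ _).symm)

theorem IsDiag.sum_single_self [AddCommMonoid α] {A : Matrix n n α} (hA : A.IsDiag) :
    ∑ i, single i i (A i i) = A :=
  (sum_single_eq_diagonal A.diag).trans hA.diagonal_diag

/-- The operators `√(τₘₘ Aₖₖ) |m⟩⟨k|` are Kraus operators of the measure-and-prepare map
`X ↦ tr(A X) τ`. -/
theorem exists_single_kraus_measure_prepare {A τ : Matrix n n ℂ} (hA : A.PosSemidef)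
    (hAd : A.IsDiag) (hτ : τ.PosSemidef) (hτd : τ.IsDiag) :
    ∃ a : n × n → ℂ,
      ∑ x, (single x.1 x.2 (a x))ᴴ * single x.1 x.2 (a x) = τ.trace • A ∧
      ∀ X, ∑ x, single x.1 x.2 (a x) * X * (single x.1 x.2 (a x))ᴴ = (A * X).trace • τ := by
  choose a ha using fun x : n × n =>
    Complex.exists_star_mul_self_eq_of_nonneg (mul_nonneg (hτ.diag_nonneg (i := x.1))
      (hA.diag_nonneg (i := x.2)))
  refine ⟨a, ?_, fun X => ?_⟩
  · calc ∑ x : n × n, (single x.1 x.2 (a x))ᴴ * single x.1 x.2 (a x)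
        = ∑ k, ∑ m, τ m m • single k k (A k k) := by
          rw [Fintype.sum_prod_type, Finset.sum_comm]
          refine Finset.sum_congr rfl fun k _ => Finset.sum_congr rfl fun m _ => ?_
          rw [conjTranspose_single, single_mul_single_same, ha, smul_single, smul_eq_mul]
      _ = τ.trace • A := by
          simp only [← Finset.sum_smul]
          rw [← Finset.smul_sum, hAd.sum_single_self]
          rfl
  · calc ∑ x : n × n, single x.1 x.2 (a x) * X * (single x.1 x.2 (a x))ᴴ
        = ∑ m, ∑ k, (A k k * X k k) • single m m (τ m m) := by
          rw [Fintype.sum_prod_type]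
          refine Finset.sum_congr rfl fun m _ => Finset.sum_congr rfl fun k _ => ?_
          rw [conjTranspose_single, single_mul_mul_single, smul_single, smul_eq_mul]
          exact congrArg _ (by linear_combination X k k * ha (m, k))
      _ = (A * X).trace • τ := by
          simp only [← Finset.sum_smul]
          rw [← Finset.smul_sum, hτd.sum_single_self, hAd.trace_mul]

end Matrix

theorem isSIKraus_single {d : ℕ} (i j : Fin d) (a : ℂ) : IsSIKraus (Matrix.single i j a) := by
  refine ⟨fun _ _ _ h h' => ?_, fun _ _ _ h h' => ?_⟩ <;>
    simp only [Matrix.single_apply, ne_eq, ite_eq_right_iff, Classical.not_imp] at h h' <;>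
    grind

theorem IsSIKraus.isDiag_conjTranspose_mul {d : ℕ} {K : Matrix (Fin d) (Fin d) ℂ}
    (hK : IsSIKraus K) : (Kᴴ * K).IsDiag := fun j j' hjj' => by
  change ∑ i, Kᴴ j i * K i j' = 0
  refine Finset.sum_eq_zero fun i _ => ?_
  by_contra h
  exact hjj' (hK.1 i j j' (by simpa using left_ne_zero_of_mul h) (right_ne_zero_of_mul h))

theorem exists_fin_sio_of_fintype {d : ℕ} {ι : Type*} [Fintype ι] {ρ X : Matrix (Fin d) (Fin d) ℂ}
    (L : ι → Matrix (Fin d) (Fin d) ℂ) (hL : ∀ i, IsSIKraus (L i))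
    (hle : ((1 : Matrix (Fin d) (Fin d) ℂ) - ∑ i, (L i)ᴴ * L i).PosSemidef)
    (hρ : ∑ i, L i * ρ * (L i)ᴴ = X) :
    ∃ (M : ℕ) (L' : Fin M → Matrix (Fin d) (Fin d) ℂ),
      (∀ j, IsSIKraus (L' j)) ∧
      ((1 : Matrix (Fin d) (Fin d) ℂ) - ∑ j, (L' j)ᴴ * L' j).PosSemidef ∧
      ∑ j, L' j * ρ * (L' j)ᴴ = X := by
  let e := Fintype.equivFin ι
  refine ⟨Fintype.card ι, fun j => L (e.symm j), fun j => hL _, ?_, ?_⟩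
  · rwa [e.symm.sum_comp fun i => (L i)ᴴ * L i]
  · rwa [e.symm.sum_comp fun i => L i * ρ * (L i)ᴴ]

theorem sio_mixing_with_incoherent_general (d : ℕ)
    (ρ σ : Matrix (Fin d) (Fin d) ℂ)
    (hρtr : ρ.trace = 1)
    (hσtr : σ.trace = 1)
    (p : ℝ)
    (hconv : ∃ (N : ℕ) (K : Fin N → Matrix (Fin d) (Fin d) ℂ),
      (∀ i, IsSIKraus (K i)) ∧
      ((1 : Matrix (Fin d) (Fin d) ℂ) - ∑ i, (K i)ᴴ * K i).PosSemidef ∧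
      ∑ i, K i * ρ * (K i)ᴴ = (p : ℂ) • σ)
    (τ : Matrix (Fin d) (Fin d) ℂ)
    (hτ : τ.PosSemidef) (hτtr : τ.trace = 1) (hτdiag : τ.IsDiag)
    (q : ℝ) (hq0 : 0 ≤ q) (hq1 : q ≤ 1 - p) :
    ∃ (M : ℕ) (L : Fin M → Matrix (Fin d) (Fin d) ℂ),
      (∀ j, IsSIKraus (L j)) ∧
      ((1 : Matrix (Fin d) (Fin d) ℂ) - ∑ j, (L j)ᴴ * L j).PosSemidef ∧
      ∑ j, L j * ρ * (L j)ᴴ = (p : ℂ) • σ + (q : ℂ) • τ := by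
  obtain ⟨N, K, hK, hDpsd, hKρ⟩ := hconv
  set D := (1 : Matrix (Fin d) (Fin d) ℂ) - ∑ i, (K i)ᴴ * K i with hD_def
  have hDdiag : D.IsDiag :=
    isDiag_one.sub (isDiag_sum_s5 fun i _ => (hK i).isDiag_conjTranspose_mul)
  have hDρ : (D * ρ).trace = 1 - p := by
    rw [trace_one_sub_sum_conjTranspose_mul_mul, hKρ, trace_smul, hρtr, hσtr, smul_eq_mul, mul_one]
  set c := q / (1 - p)
  have hc0 : 0 ≤ c := div_nonneg hq0 (hq0.trans hq1)
  have hc1 : c ≤ 1 := div_le_one_of_le₀ hq1 (hq0.trans hq1)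
  -- if `p = 1` then `q = 0`, and `c = q / 0 = 0` still works
  have hcq : (c : ℂ) * (1 - p) = q := by
    exact_mod_cast div_mul_cancel_of_imp fun h => le_antisymm (h ▸ hq1) hq0
  obtain ⟨a, hEE, hEρ⟩ := exists_single_kraus_measure_prepare
    (hDpsd.smul (Complex.zero_le_real.2 hc0)) (hDdiag.smul (c : ℂ)) hτ hτdiag
  refine exists_fin_sio_of_fintype (Sum.elim K fun x => single x.1 x.2 (a x))
    (Sum.rec hK fun x => isSIKraus_single _ _ _) ?_ ?_
  · rw [Fintype.sum_sum_type]
    simp only [Sum.elim_inl, Sum.elim_inr]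
    rw [hEE, hτtr, one_smul]
    convert hDpsd.smul (Complex.zero_le_real.2 (sub_nonneg.2 hc1)) using 1
    rw [← sub_sub, ← hD_def, Complex.ofReal_sub, Complex.ofReal_one, sub_smul, one_smul]
  · rw [Fintype.sum_sum_type]
    simp only [Sum.elim_inl, Sum.elim_inr]
    rw [hKρ, hEρ, smul_mul, trace_smul, hDρ, smul_eq_mul, hcq]

/-- If `ρ → p σ` is possible by a stochastic strictly incoherent operation, then for every
incoherent (diagonal) state `τ` and every `0 ≤ q ≤ 1 - p`, also `ρ → p σ + q τ` is
possible by a stochastic strictly incoherent operation. -/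
theorem sio_mixing_with_incoherent (d : ℕ)
    (ρ σ : Matrix (Fin d) (Fin d) ℂ)
    (hρ : ρ.PosSemidef) (hρtr : ρ.trace = 1)
    (hσ : σ.PosSemidef) (hσtr : σ.trace = 1)
    (p : ℝ) (hp0 : 0 ≤ p) (hp1 : p ≤ 1)
    (hconv : ∃ (N : ℕ) (K : Fin N → Matrix (Fin d) (Fin d) ℂ),
      (∀ i, IsSIKraus (K i)) ∧
      ((1 : Matrix (Fin d) (Fin d) ℂ) - ∑ i, (K i)ᴴ * K i).PosSemidef ∧
      ∑ i, K i * ρ * (K i)ᴴ = (p : ℂ) • σ)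
    (τ : Matrix (Fin d) (Fin d) ℂ)
    (hτ : τ.PosSemidef) (hτtr : τ.trace = 1) (hτdiag : τ.IsDiag)
    (q : ℝ) (hq0 : 0 ≤ q) (hq1 : q ≤ 1 - p) :
    ∃ (M : ℕ) (L : Fin M → Matrix (Fin d) (Fin d) ℂ),
      (∀ j, IsSIKraus (L j)) ∧
      ((1 : Matrix (Fin d) (Fin d) ℂ) - ∑ j, (L j)ᴴ * L j).PosSemidef ∧
      ∑ j, L j * ρ * (L j)ᴴ = (p : ℂ) • σ + (q : ℂ) • τ :=
  sio_mixing_with_incoherent_general d ρ σ hρtr hσtr p hconv τ hτ hτtr hτdiag q hq0 hq1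
end

section
/- Let 0 ≤ q_w ≤ 1 and let ρ_w = q_w·|φ⁺⟩⟨φ⁺| + ((1−q_w)/4)·I be the two-qubit Werner state, where φ⁺ = (|00⟩+|11⟩)/√2. For every Hermitian 2×2 matrix M with 0 ⪯ M ⪯ I such that t := Tr[(M ⊗ I)·ρ_w] is a positive real number, the normalized post-measurement state σ = Tr_A[(M ⊗ I)·ρ_w]/t on Bob's side satisfies σ ⪯ (1+q_w)·Δσ; that is, the Δ-robustness of coherence of any of Bob's post-measurement states is at most q_w. -/
/-!
Bob's unnormalised conditional state is `τ = (q/2) Mᵀ + ((1 - q)/4) (tr M) I`, and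
`(1 + q) Δτ - τ = (q(1 + q)/4) Z Mᵀ Z + (q(1 - q)/4) Y M Y` with the Pauli matrices `Y`, `Z`:
for `0 ≤ q ≤ 1` both coefficients are nonnegative and both matrices are unitary conjugates of
positive matrices. Normalising by `t > 0` only rescales this.
-/

open Matrix BigOperators
open scoped Kronecker Classical ComplexOrder

/-- The maximally entangled two-qubit state `(|00⟩ + |11⟩)/√2`. -/
noncomputable def phiPlus : Fin 2 × Fin 2 → ℂ :=
  fun x => if x.1 = x.2 then ((Real.sqrt 2)⁻¹ : ℝ) else 0

/-- The two-qubit Werner state `q |φ⁺⟩⟨φ⁺| + (1-q)/4 · I`. -/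
noncomputable def wernerState (qw : ℝ) : Matrix (Fin 2 × Fin 2) (Fin 2 × Fin 2) ℂ :=
  (qw : ℂ) • Matrix.vecMulVec phiPlus (star phiPlus) + (((1 - qw) / 4 : ℝ) : ℂ) • 1

section PartialTrace

variable {dA dB : ℕ}

lemma ptraceA_add (X Y : Matrix (Fin dA × Fin dB) (Fin dA × Fin dB) ℂ) :
    ptraceA (X + Y) = ptraceA X + ptraceA Y := by
  ext j j'
  simp [ptraceA, Finset.sum_add_distrib]

lemma ptraceA_smul (c : ℂ) (X : Matrix (Fin dA × Fin dB) (Fin dA × Fin dB) ℂ) :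
    ptraceA (c • X) = c • ptraceA X := by
  ext j j'
  simp [ptraceA, Finset.mul_sum]

lemma ptraceA_kronecker (A : Matrix (Fin dA) (Fin dA) ℂ) (B : Matrix (Fin dB) (Fin dB) ℂ) :
    ptraceA (A ⊗ₖ B) = A.trace • B := by
  ext j j'
  simp [ptraceA, Matrix.trace, Finset.sum_mul]

end PartialTrace

lemma ptraceA_kronecker_one_mul_phiPlus (M : Matrix (Fin 2) (Fin 2) ℂ) :
    ptraceA ((M ⊗ₖ (1 : Matrix (Fin 2) (Fin 2) ℂ)) * vecMulVec phiPlus (star phiPlus)) =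
      (1 / 2 : ℂ) • Mᵀ := by
  have hhalf : ((Real.sqrt 2)⁻¹ : ℂ) * ((Real.sqrt 2)⁻¹ : ℂ) = 1 / 2 := by
    rw [← mul_inv, ← Complex.ofReal_mul, Real.mul_self_sqrt zero_le_two]
    norm_num
  ext j j'
  fin_cases j <;> fin_cases j' <;>
    simp [ptraceA, phiPlus, mul_apply, vecMulVec_apply, one_apply, Fintype.sum_prod_type,
      Fin.sum_univ_two, hhalf, mul_comm]

lemma ptraceA_kronecker_one_mul_wernerState (q : ℝ) (M : Matrix (Fin 2) (Fin 2) ℂ) :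
    ptraceA ((M ⊗ₖ (1 : Matrix (Fin 2) (Fin 2) ℂ)) * wernerState q) =
      ((q : ℂ) / 2) • Mᵀ + ((1 - q) / 4 * M.trace) • 1 := by
  rw [wernerState, mul_add, Matrix.mul_smul, Matrix.mul_smul, mul_one, ptraceA_add, ptraceA_smul,
    ptraceA_smul, ptraceA_kronecker_one_mul_phiPlus, ptraceA_kronecker, smul_smul, smul_smul]
  push_cast
  ring_nf

lemma dephase_smul {d : ℕ} (c : ℂ) (X : Matrix (Fin d) (Fin d) ℂ) :
    dephase (c • X) = c • dephase X := by
  simp [dephase]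

def pauliY : Matrix (Fin 2) (Fin 2) ℂ := !![0, -Complex.I; Complex.I, 0]

def pauliZ : Matrix (Fin 2) (Fin 2) ℂ := !![1, 0; 0, -1]

lemma pauliZ_mul_mul_conjTranspose (A : Matrix (Fin 2) (Fin 2) ℂ) :
    pauliZ * A * pauliZᴴ = !![A 0 0, -A 0 1; -A 1 0, A 1 1] := by
  ext i j
  fin_cases i <;> fin_cases j <;>
    simp [pauliZ, mul_apply, vecMul, dotProduct, Fin.sum_univ_two]

lemma pauliY_mul_mul_conjTranspose (A : Matrix (Fin 2) (Fin 2) ℂ) :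
    pauliY * A * pauliYᴴ = !![A 1 1, -A 1 0; -A 0 1, A 0 0] := by
  ext i j
  fin_cases i <;> fin_cases j <;>
    simp [pauliY, mul_apply, vecMul, dotProduct, Fin.sum_univ_two, mul_comm _ Complex.I,
      ← mul_assoc]

lemma smul_dephase_sub_eq (q : ℂ) (M : Matrix (Fin 2) (Fin 2) ℂ) :
    (1 + q) • dephase ((q / 2) • Mᵀ + ((1 - q) / 4 * M.trace) • 1) -
        ((q / 2) • Mᵀ + ((1 - q) / 4 * M.trace) • 1) =
      (q * (1 + q) / 4) • (pauliZ * Mᵀ * pauliZᴴ) +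
        (q * (1 - q) / 4) • (pauliY * M * pauliYᴴ) := by
  rw [pauliZ_mul_mul_conjTranspose, pauliY_mul_mul_conjTranspose]
  ext i j
  fin_cases i <;> fin_cases j <;>
    simp only [dephase, trace, Fin.sum_univ_two, Matrix.sub_apply, Matrix.add_apply,
      Matrix.smul_apply, smul_eq_mul, diagonal_apply, diag_apply, transpose_apply, one_apply,
      of_apply, cons_val', cons_val_zero, cons_val_one, cons_val_fin_one, Fin.zero_eta, Fin.mk_one,
      Fin.isValue, Fin.reduceEq, ↓reduceIte] <;>
    ring

lemma posSemidef_smul_dephase_sub_ptraceA_wernerState {q : ℝ} (hq0 : 0 ≤ q) (hq1 : q ≤ 1)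
    {M : Matrix (Fin 2) (Fin 2) ℂ} (hM : M.PosSemidef) :
    ((1 + q : ℂ) • dephase (ptraceA ((M ⊗ₖ (1 : Matrix (Fin 2) (Fin 2) ℂ)) * wernerState q)) -
      ptraceA ((M ⊗ₖ (1 : Matrix (Fin 2) (Fin 2) ℂ)) * wernerState q)).PosSemidef := by
  have h_plus : (0 : ℂ) ≤ q * (1 + q) / 4 := by
    exact_mod_cast (by positivity : (0 : ℝ) ≤ q * (1 + q) / 4)
  have h_minus : (0 : ℂ) ≤ q * (1 - q) / 4 := by
    have : 0 ≤ 1 - q := sub_nonneg.mpr hq1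
    exact_mod_cast (by positivity : (0 : ℝ) ≤ q * (1 - q) / 4)
  rw [ptraceA_kronecker_one_mul_wernerState, smul_dephase_sub_eq]
  exact ((hM.transpose.mul_mul_conjTranspose_same pauliZ).smul h_plus).add
    ((hM.mul_mul_conjTranspose_same pauliY).smul h_minus)

theorem werner_post_measurement_robustness_general
    (qw : ℝ) (hqw0 : 0 ≤ qw) (hqw1 : qw ≤ 1)
    (M : Matrix (Fin 2) (Fin 2) ℂ) (hM0 : M.PosSemidef)
    (t : ℝ) (ht : 0 < t)
    (σ : Matrix (Fin 2) (Fin 2) ℂ)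
    (hσ : σ = (t : ℂ)⁻¹ • ptraceA ((M ⊗ₖ (1 : Matrix (Fin 2) (Fin 2) ℂ)) * wernerState qw)) :
    (((1 + qw : ℝ) : ℂ) • dephase σ - σ).PosSemidef := by
  have ht_inv : (0 : ℂ) ≤ (t : ℂ)⁻¹ := by exact_mod_cast inv_nonneg.mpr ht.le
  rw [hσ, dephase_smul, smul_comm, ← smul_sub, Complex.ofReal_add, Complex.ofReal_one]
  exact (posSemidef_smul_dephase_sub_ptraceA_wernerState hqw0 hqw1 hM0).smul ht_inv

/-- Every normalized post-measurement state of Bob obtained from the Werner state by a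
POVM element on Alice's side has Δ-robustness of coherence at most `q_w`, i.e.
`σ ⪯ (1 + q_w) Δσ`. -/
theorem werner_post_measurement_robustness
    (qw : ℝ) (hqw0 : 0 ≤ qw) (hqw1 : qw ≤ 1)
    (M : Matrix (Fin 2) (Fin 2) ℂ) (hM : M.IsHermitian) (hM0 : M.PosSemidef)
    (hM1 : ((1 : Matrix (Fin 2) (Fin 2) ℂ) - M).PosSemidef)
    (t : ℝ) (ht : 0 < t)
    (htr : ((M ⊗ₖ (1 : Matrix (Fin 2) (Fin 2) ℂ)) * wernerState qw).trace = (t : ℂ))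
    (σ : Matrix (Fin 2) (Fin 2) ℂ)
    (hσ : σ = (t : ℂ)⁻¹ • ptraceA ((M ⊗ₖ (1 : Matrix (Fin 2) (Fin 2) ℂ)) * wernerState qw)) :
    (((1 + qw : ℝ) : ℂ) • dephase σ - σ).PosSemidef :=
  werner_post_measurement_robustness_general qw hqw0 hqw1 M hM0 t ht σ hσ
end
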